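/- arXiv:2007.03311 — 3 statements merged into one kernel-verified Lean document; each statement's English description precedes it below -/
import Mathlib

section
/- Suppose each f_i : ℝ^d → ℝ is convex and L-smooth, with f = (1/n)Σ f_i. Let G = g_ν(y, i) − g_ν(z, i) + g_ν(z), where g_ν(x, i) is the coordinate-wise central-difference estimator with smoothing ν and g_ν(x) = (1/n)Σ_i g_ν(x, i), and i is uniform on {1,…,n}. Then E_i[‖G − ∇f(y)‖²] ≤ 12 L² d ν² + 8L [f(z) − f(y) − ⟨∇f(y), z − y⟩] for all y, z ∈ ℝ^d. -/
/-!
Write `G i - ∇f(y) = a i + (u i - ū)` with `a i = g_ν(y, i) - ∇f_i(y)` and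
`u i = ∇f_i(y) - g_ν(z, i)`. Averaging over `i`, `‖u i - ū‖²` is dominated by `‖u i‖²`, and `u i` is
the gradient difference `∇f_i(y) - ∇f_i(z)`, controlled by cocoercivity, minus the
central-difference error at `z`. By the mean value inequality each central-difference error is at
most `L ν` in every coordinate, so `d L² ν²` in squared norm. Collecting terms gives
`6 L² d ν² + 8 L [f(z) - f(y) - ⟪∇f(y), z - y⟫]`.
-/

open Finset
open scoped RealInnerProductSpace

section

variable {E : Type*} [NormedAddCommGroup E]

theorem norm_add_sq_le_two_mul (a b : E) : ‖a + b‖ ^ 2 ≤ 2 * (‖a‖ ^ 2 + ‖b‖ ^ 2) :=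
  (pow_le_pow_left₀ (norm_nonneg _) (norm_add_le a b) 2).trans add_sq_le

theorem norm_sub_sq_le_two_mul (a b : E) : ‖a - b‖ ^ 2 ≤ 2 * (‖a‖ ^ 2 + ‖b‖ ^ 2) := by
  simpa [sub_eq_add_neg] using norm_add_sq_le_two_mul a (-b)

variable [InnerProductSpace ℝ E]

theorem sum_norm_sub_mean_sq_le {ι : Type*} [Fintype ι] (v : ι → E) :
    ∑ i, ‖v i - (Fintype.card ι : ℝ)⁻¹ • ∑ j, v j‖ ^ 2 ≤ ∑ i, ‖v i‖ ^ 2 := by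
  set m := (Fintype.card ι : ℝ)⁻¹ • ∑ j, v j
  have hsum : ∑ j, v j = (Fintype.card ι : ℝ) • m := by
    rcases isEmpty_or_nonempty ι with _ | _
    · simp
    · rw [smul_inv_smul₀ (by positivity)]
  have hexpand : ∑ i, ‖v i - m‖ ^ 2 = ∑ i, ‖v i‖ ^ 2 - Fintype.card ι * ‖m‖ ^ 2 := by
    simp only [norm_sub_sq_real, sum_add_distrib, sum_sub_distrib, ← mul_sum, ← sum_inner, hsum,
      real_inner_smul_left, real_inner_self_eq_norm_sq, sum_const, card_univ, nsmul_eq_mul]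
    ring
  rw [hexpand]
  exact sub_le_self _ (by positivity)

theorem sum_norm_control_variate_sub_mean_sq_le {ι : Type*} [Fintype ι] (p q p' q' : ι → E) :
    ∑ i, ‖p i - q i + (Fintype.card ι : ℝ)⁻¹ • ∑ j, q j - (Fintype.card ι : ℝ)⁻¹ • ∑ j, p' j‖ ^ 2
      ≤ ∑ i, (2 * ‖p i - p' i‖ ^ 2 + 4 * ‖q i - q' i‖ ^ 2 + 4 * ‖p' i - q' i‖ ^ 2) := by
  set N : ℝ := (Fintype.card ι : ℝ)⁻¹
  set u : ι → E := fun i => p' i - q i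
  have hdecomp : ∀ i, p i - q i + N • ∑ j, q j - N • ∑ j, p' j
      = (p i - p' i) + (u i - N • ∑ j, u j) := by
    intro i
    simp only [u, sum_sub_distrib, smul_sub]
    abel
  have hu : ∀ i, ‖u i‖ ^ 2 ≤ 2 * (‖p' i - q' i‖ ^ 2 + ‖q i - q' i‖ ^ 2) := fun i => by
    simpa [u] using norm_sub_sq_le_two_mul (p' i - q' i) (q i - q' i)
  calc _ ≤ ∑ i, (2 * ‖p i - p' i‖ ^ 2 + 2 * ‖u i - N • ∑ j, u j‖ ^ 2) :=
        sum_le_sum fun i _ => by rw [hdecomp, ← mul_add]; exact norm_add_sq_le_two_mul _ _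
    _ ≤ ∑ i, (2 * ‖p i - p' i‖ ^ 2 + 2 * ‖u i‖ ^ 2) := by
      simp only [sum_add_distrib, ← mul_sum]
      gcongr _ + 2 * ?_
      exact sum_norm_sub_mean_sq_le u
    _ ≤ _ := sum_le_sum fun i _ => by linarith [hu i]

variable [CompleteSpace E] {f : E → ℝ}

theorem HasGradientAt.hasDerivAt_comp_add_smul {x v g : E} {t : ℝ}
    (hf : HasGradientAt f g (x + t • v)) :
    HasDerivAt (fun s : ℝ => f (x + s • v)) ⟪g, v⟫ t := by
  have hline : HasDerivAt (fun s : ℝ => x + s • v) v t := by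
    simpa using ((hasDerivAt_id t).smul_const v).const_add x
  exact (hasGradientAt_iff_hasFDerivAt.1 hf).comp_hasDerivAt t hline

theorem ConvexOn.add_inner_le_of_hasGradientAt {x g : E} (hc : ConvexOn ℝ Set.univ f)
    (hf : HasGradientAt f g x) (y : E) : f x + ⟪g, y - x⟫ ≤ f y := by
  have hline : ConvexOn ℝ Set.univ (fun t : ℝ => f (x + t • (y - x))) := by
    simpa [Function.comp_def, AffineMap.lineMap_apply, add_comm] using
      hc.comp_affineMap (AffineMap.lineMap x y)
  have hderiv : HasDerivAt (fun t : ℝ => f (x + t • (y - x))) ⟪g, y - x⟫ 0 :=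
    HasGradientAt.hasDerivAt_comp_add_smul (by simpa using hf)
  have := hline.le_slope_of_hasDerivAt (Set.mem_univ 0) (Set.mem_univ 1) one_pos hderiv
  simp only [slope, sub_zero, inv_one, one_smul, add_sub_cancel, zero_smul, add_zero, vsub_eq_sub,
    smul_eq_mul, one_mul] at this
  linarith

theorem apply_add_le_of_lipschitz_gradient {f' : E → E} {L : ℝ}
    (hf : ∀ x, HasGradientAt f (f' x) x) (hlip : ∀ x y, ‖f' x - f' y‖ ≤ L * ‖x - y‖)
    (x v : E) : f (x + v) ≤ f x + ⟪f' x, v⟫ + L / 2 * ‖v‖ ^ 2 := by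
  have hφ : ∀ t : ℝ, HasDerivAt (fun s : ℝ => f (x + s • v)) ⟪f' (x + t • v), v⟫ t :=
    fun t => (hf _).hasDerivAt_comp_add_smul
  have hB : ∀ t : ℝ, HasDerivAt (fun s : ℝ => f x + s * ⟪f' x, v⟫ + L / 2 * s ^ 2 * ‖v‖ ^ 2)
      (⟪f' x, v⟫ + L * t * ‖v‖ ^ 2) t := by
    intro t
    refine ((((hasDerivAt_id' t).mul_const ⟪f' x, v⟫).const_add (f x)).add
      (((hasDerivAt_pow 2 t).const_mul (L / 2)).mul_const (‖v‖ ^ 2))).congr_deriv ?_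
    push_cast
    ring
  have hslope : ∀ t ∈ Set.Ico (0 : ℝ) 1, ⟪f' (x + t • v), v⟫ ≤ ⟪f' x, v⟫ + L * t * ‖v‖ ^ 2 := by
    rintro t ⟨ht, -⟩
    calc ⟪f' (x + t • v), v⟫ = ⟪f' x, v⟫ + ⟪f' (x + t • v) - f' x, v⟫ := by
          rw [inner_sub_left]; ring
      _ ≤ ⟪f' x, v⟫ + L * ‖x + t • v - x‖ * ‖v‖ := by
          gcongr
          exact (real_inner_le_norm _ _).trans (by gcongr; exact hlip _ _)
      _ = ⟪f' x, v⟫ + L * t * ‖v‖ ^ 2 := by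
          rw [add_sub_cancel_left, norm_smul, Real.norm_of_nonneg ht]; ring
  have := image_le_of_deriv_right_le_deriv_boundary
    (fun t _ => (hφ t).continuousAt.continuousWithinAt) (fun t _ => (hφ t).hasDerivWithinAt)
    (by simp) (fun t _ => (hB t).continuousAt.continuousWithinAt)
    (fun t _ => (hB t).hasDerivWithinAt) hslope (Set.right_mem_Icc.2 zero_le_one)
  simpa using this

theorem ConvexOn.norm_sub_sq_le_of_lipschitz_gradient {f' : E → E} {L : ℝ}
    (hc : ConvexOn ℝ Set.univ f) (hf : ∀ x, HasGradientAt f (f' x) x) (hL : 0 ≤ L)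
    (hlip : ∀ x y, ‖f' x - f' y‖ ≤ L * ‖x - y‖) (y z : E) :
    ‖f' y - f' z‖ ^ 2 ≤ 2 * L * (f z - f y - ⟪f' y, z - y⟫) := by
  rcases hL.eq_or_lt with rfl | hL
  · simpa using hlip y z
  -- Bound `f` at `z - L⁻¹ Δ` from above by smoothness at `z` and from below by convexity at `y`.
  set Δ := f' z - f' y
  have hup := apply_add_le_of_lipschitz_gradient hf hlip z (-L⁻¹ • Δ)
  have hlow := hc.add_inner_le_of_hasGradientAt (hf y) (z + -L⁻¹ • Δ)
  have hΔ : L⁻¹ * ⟪f' z, Δ⟫ - L⁻¹ * ⟪f' y, Δ⟫ = L⁻¹ * ‖Δ‖ ^ 2 := by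
    rw [← mul_sub, ← inner_sub_left, real_inner_self_eq_norm_sq]
  rw [add_sub_right_comm, inner_add_right, inner_smul_right] at hlow
  rw [inner_smul_right, norm_smul, mul_pow, norm_neg, norm_inv, Real.norm_of_nonneg hL.le] at hup
  have hkey : ‖Δ‖ ^ 2 / (2 * L) ≤ f z - f y - ⟪f' y, z - y⟫ := by
    have : L / 2 * (L⁻¹ ^ 2 * ‖Δ‖ ^ 2) = L⁻¹ * ‖Δ‖ ^ 2 - ‖Δ‖ ^ 2 / (2 * L) := by
      field_simp; ring
    linarith
  rw [norm_sub_rev]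
  rwa [div_le_iff₀' (by positivity)] at hkey

theorem abs_sub_sub_two_mul_inner_le {f' : E → E} {L : ℝ}
    (hf : ∀ x, HasGradientAt f (f' x) x) (hL : 0 ≤ L)
    (hlip : ∀ x y, ‖f' x - f' y‖ ≤ L * ‖x - y‖) (x v : E) :
    |f (x + v) - f (x - v) - 2 * ⟪f' x, v⟫| ≤ 2 * L * ‖v‖ ^ 2 := by
  have hbound : ∀ w ∈ Metric.closedBall x ‖v‖,
      ‖InnerProductSpace.toDual ℝ E (f' w) - InnerProductSpace.toDual ℝ E (f' x)‖ ≤ L * ‖v‖ := by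
    intro w hw
    rw [← map_sub, LinearIsometryEquiv.norm_map]
    exact (hlip w x).trans (by gcongr; exact mem_closedBall_iff_norm.1 hw)
  have hmv := (convex_closedBall x ‖v‖).norm_image_sub_le_of_norm_hasFDerivWithin_le'
    (fun w _ => (hf w).hasFDerivAt.hasFDerivWithinAt) hbound
    (x := x - v) (y := x + v) (by simp) (by simp)
  have h2v : x + v - (x - v) = (2 : ℝ) • v := by rw [two_smul]; abel
  rw [h2v, InnerProductSpace.toDual_apply_apply, real_inner_smul_right, Real.norm_eq_abs,
    norm_smul, Real.norm_two] at hmv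
  linarith

noncomputable def centralDiffGrad {ι : Type*} [Fintype ι] (b : OrthonormalBasis ι ℝ E)
    (f : E → ℝ) (ν : ℝ) (x : E) : E :=
  ∑ j, ((f (x + ν • b j) - f (x - ν • b j)) / (2 * ν)) • b j

theorem norm_centralDiffGrad_sub_sq_le {ι : Type*} [Fintype ι] (b : OrthonormalBasis ι ℝ E)
    {f' : E → E} {L ν : ℝ} (hf : ∀ x, HasGradientAt f (f' x) x) (hL : 0 ≤ L)
    (hlip : ∀ x y, ‖f' x - f' y‖ ≤ L * ‖x - y‖) (hν : ν ≠ 0) (x : E) :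
    ‖centralDiffGrad b f ν x - f' x‖ ^ 2 ≤ Fintype.card ι * (L * ν) ^ 2 := by
  set c : ι → ℝ := fun j => (f (x + ν • b j) - f (x - ν • b j)) / (2 * ν) - ⟪b j, f' x⟫
  have hcoord : ∀ j, c j ^ 2 ≤ (L * ν) ^ 2 := by
    intro j
    have hj : c j = (f (x + ν • b j) - f (x - ν • b j) - 2 * ⟪f' x, ν • b j⟫) / (2 * ν) := by
      simp only [c, real_inner_smul_right, real_inner_comm (f' x)]
      field_simp
    have hdiff := abs_sub_sub_two_mul_inner_le hf hL hlip x (ν • b j)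
    rw [norm_smul, b.orthonormal.1 j, mul_one, Real.norm_eq_abs, sq_abs] at hdiff
    rw [sq_le_sq, hj, abs_div, div_le_iff₀ (by positivity), abs_mul, abs_of_nonneg hL, abs_mul,
      abs_two]
    nlinarith [sq_abs ν]
  have hexp : centralDiffGrad b f ν x - f' x = ∑ j, c j • b j := by
    conv_lhs => rw [← b.sum_repr' (f' x)]
    simp only [centralDiffGrad, c, sub_smul, sum_sub_distrib]
  calc ‖centralDiffGrad b f ν x - f' x‖ ^ 2 = ∑ j, c j ^ 2 := by
        simp only [← b.sum_sq_inner_right, hexp, b.orthonormal.inner_right_fintype]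
    _ ≤ ∑ _j : ι, (L * ν) ^ 2 := sum_le_sum fun j _ => hcoord j
    _ = Fintype.card ι * (L * ν) ^ 2 := by simp

end

theorem coordinate_vr_estimator_variance_general
    (d n : ℕ)
    (f : Fin n → EuclideanSpace ℝ (Fin d) → ℝ)
    (f' : Fin n → EuclideanSpace ℝ (Fin d) → EuclideanSpace ℝ (Fin d))
    (hconv : ∀ i, ConvexOn ℝ Set.univ (f i))
    (hgrad : ∀ i x, HasGradientAt (f i) (f' i x) x)
    (L : ℝ) (hL : 0 ≤ L)
    (hlip : ∀ i x y, ‖f' i x - f' i y‖ ≤ L * ‖x - y‖)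
    (ν : ℝ) (hν : 0 < ν)
    (gν : EuclideanSpace ℝ (Fin d) → Fin n → EuclideanSpace ℝ (Fin d))
    (hgν : ∀ x i, gν x i = ∑ j : Fin d,
      ((f i (x + ν • EuclideanSpace.single j (1 : ℝ))
        - f i (x - ν • EuclideanSpace.single j (1 : ℝ))) / (2 * ν)) •
        EuclideanSpace.single j (1 : ℝ))
    (favg : EuclideanSpace ℝ (Fin d) → ℝ)
    (hfavg : ∀ x, favg x = (1 / (n : ℝ)) * ∑ i, f i x)
    (gradavg : EuclideanSpace ℝ (Fin d) → EuclideanSpace ℝ (Fin d))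
    (hgradavg : ∀ x, gradavg x = (1 / (n : ℝ)) • ∑ i, f' i x)
    (y z : EuclideanSpace ℝ (Fin d))
    (G : Fin n → EuclideanSpace ℝ (Fin d))
    (hG : ∀ i, G i = gν y i - gν z i + (1 / (n : ℝ)) • ∑ k, gν z k) :
    (1 / (n : ℝ)) * ∑ i, ‖G i - gradavg y‖ ^ 2 ≤
      12 * L ^ 2 * d * ν ^ 2 +
        8 * L * (favg z - favg y - ⟪gradavg y, z - y⟫) := by
  simp only [one_div] at hfavg hgradavg hG ⊢
  set A : ℝ := d * (L * ν) ^ 2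
  have hbias : ∀ x i, ‖gν x i - f' i x‖ ^ 2 ≤ A := fun x i => by
    simpa [centralDiffGrad, hgν] using norm_centralDiffGrad_sub_sq_le
      (EuclideanSpace.basisFun (Fin d) ℝ) (hgrad i) hL (hlip i) hν.ne' x
  have hpoint : ∀ i, 2 * ‖gν y i - f' i y‖ ^ 2 + 4 * ‖gν z i - f' i z‖ ^ 2
      + 4 * ‖f' i y - f' i z‖ ^ 2 ≤ 6 * A + 8 * L * (f i z - f i y - ⟪f' i y, z - y⟫) := fun i => by
    linarith [hbias y i, hbias z i,
      (hconv i).norm_sub_sq_le_of_lipschitz_gradient (hgrad i) hL (hlip i) y z]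
  have hvar := sum_norm_control_variate_sub_mean_sq_le (gν y) (gν z) (f' · y) (f' · z)
  simp only [Fintype.card_fin, ← hG, ← hgradavg] at hvar
  have hmean : (n : ℝ)⁻¹ * ∑ i, (f i z - f i y - ⟪f' i y, z - y⟫) =
      favg z - favg y - ⟪gradavg y, z - y⟫ := by
    simp only [hfavg, hgradavg, sum_sub_distrib, ← sum_inner, real_inner_smul_left]
    ring
  calc _ ≤ (n : ℝ)⁻¹ * ∑ i, (6 * A + 8 * L * (f i z - f i y - ⟪f' i y, z - y⟫)) := by
        gcongr (n : ℝ)⁻¹ * ?_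
        exact hvar.trans (sum_le_sum fun i _ => hpoint i)
    _ = (n : ℝ)⁻¹ * (n * (6 * A)) + 8 * L * (favg z - favg y - ⟪gradavg y, z - y⟫) := by
      rw [sum_add_distrib, sum_const, card_univ, Fintype.card_fin, nsmul_eq_mul, ← mul_sum,
        ← hmean]
      ring
    _ ≤ 12 * L ^ 2 * d * ν ^ 2 + 8 * L * (favg z - favg y - ⟪gradavg y, z - y⟫) := by
      have hA : 0 ≤ A := by positivity
      linarith [inv_mul_left_le (a := (n : ℝ)) (mul_nonneg (by norm_num : (0 : ℝ) ≤ 6) hA)]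

/-- Variance bound for the coordinate-wise variance-reduced DFO gradient estimator:
for convex L-smooth `f_i` with average `f`, and
`G_i = g_ν(y,i) − g_ν(z,i) + g_ν(z)`, one has
`E_i ‖G_i − ∇f(y)‖² ≤ 12 L² d ν² + 8L [f(z) − f(y) − ⟨∇f(y), z − y⟩]`. -/
theorem coordinate_vr_estimator_variance
    (d n : ℕ) (hn : 0 < n)
    (f : Fin n → EuclideanSpace ℝ (Fin d) → ℝ)
    (f' : Fin n → EuclideanSpace ℝ (Fin d) → EuclideanSpace ℝ (Fin d))
    (hconv : ∀ i, ConvexOn ℝ Set.univ (f i))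
    (hgrad : ∀ i x, HasGradientAt (f i) (f' i x) x)
    (L : ℝ) (hL : 0 ≤ L)
    (hlip : ∀ i x y, ‖f' i x - f' i y‖ ≤ L * ‖x - y‖)
    (ν : ℝ) (hν : 0 < ν)
    (gν : EuclideanSpace ℝ (Fin d) → Fin n → EuclideanSpace ℝ (Fin d))
    (hgν : ∀ x i, gν x i = ∑ j : Fin d,
      ((f i (x + ν • EuclideanSpace.single j (1 : ℝ))
        - f i (x - ν • EuclideanSpace.single j (1 : ℝ))) / (2 * ν)) •
        EuclideanSpace.single j (1 : ℝ))
    (favg : EuclideanSpace ℝ (Fin d) → ℝ)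
    (hfavg : ∀ x, favg x = (1 / (n : ℝ)) * ∑ i, f i x)
    (gradavg : EuclideanSpace ℝ (Fin d) → EuclideanSpace ℝ (Fin d))
    (hgradavg : ∀ x, gradavg x = (1 / (n : ℝ)) • ∑ i, f' i x)
    (y z : EuclideanSpace ℝ (Fin d))
    (G : Fin n → EuclideanSpace ℝ (Fin d))
    (hG : ∀ i, G i = gν y i - gν z i + (1 / (n : ℝ)) • ∑ k, gν z k) :
    (1 / (n : ℝ)) * ∑ i, ‖G i - gradavg y‖ ^ 2 ≤
      12 * L ^ 2 * d * ν ^ 2 +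
        8 * L * (favg z - favg y - ⟪gradavg y, z - y⟫) :=
  coordinate_vr_estimator_variance_general d n f f' hconv hgrad L hL hlip ν hν gν hgν favg hfavg
    gradavg hgradavg y z G hG
end

section
/- If f : ℝ^d → ℝ is L-smooth, then ‖∇f_μ(x) − ∇f(x)‖ ≤ μ L (d + 3)^{3/2} / 2 for every x, where f_μ is the Gaussian smoothing of f. -/
/-!
The error `∇f_μ(x) − ∇f(x)` is the Gaussian average of `∇f(x + μu) − ∇f(x)`, whose norm is at
most `Lμ‖u‖ ≤ Lμ(‖u‖² + 1)/2`. Hence the error is at most `Lμ(E‖u‖² + 1)/2 = Lμ(d + 1)/2`,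
which is below `Lμ(d + 3)^{3/2}/2`. The second moment `E‖u‖² = d` follows from the product
structure of the Gaussian and the one-dimensional identity `∫ x² e^{-x²/2} = ∫ e^{-x²/2}`
(integration by parts against `(-e^{-x²/2})' = x e^{-x²/2}`).
-/

open MeasureTheory Real
open scoped NNReal

lemma integrable_pow_mul_exp_neg_sq_div_two (k : ℕ) :
    Integrable fun x : ℝ => x ^ k * exp (-x ^ 2 / 2) := by
  have := integrable_rpow_mul_exp_neg_mul_sq (b := 1 / 2) (by norm_num) (s := k)
    (neg_one_lt_zero.trans_le k.cast_nonneg)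
  convert this using 2 with x
  rw [rpow_natCast]; ring_nf

lemma hasDerivAt_neg_exp_neg_sq_div_two (x : ℝ) :
    HasDerivAt (fun x => -exp (-x ^ 2 / 2)) (x * exp (-x ^ 2 / 2)) x := by
  have h : HasDerivAt (fun x : ℝ => -x ^ 2 / 2) (-x) x :=
    ((hasDerivAt_pow 2 x).neg.div_const 2).congr_deriv (by ring)
  exact h.exp.neg.congr_deriv (by ring)

lemma integral_sq_mul_exp_neg_sq_div_two :
    ∫ x : ℝ, x ^ 2 * exp (-x ^ 2 / 2) = ∫ x : ℝ, exp (-x ^ 2 / 2) := by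
  have h := integral_mul_deriv_eq_deriv_mul_of_integrable (u := id) (u' := fun _ => 1)
    (fun x _ => hasDerivAt_id x) (fun x _ => hasDerivAt_neg_exp_neg_sq_div_two x)
    ((integrable_pow_mul_exp_neg_sq_div_two 2).congr (.of_forall fun x => by simp only [Pi.mul_apply, id]; ring))
    ((integrable_pow_mul_exp_neg_sq_div_two 0).neg.congr (.of_forall fun x => by simp))
    ((integrable_pow_mul_exp_neg_sq_div_two 1).neg.congr (.of_forall fun x => by simp))
  simpa [← mul_assoc, sq, integral_neg] using h

section EuclideanSpace

variable {ι : Type*} [Fintype ι]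

lemma integral_exp_neg_sq_norm_div_two :
    ∫ u : EuclideanSpace ℝ ι, exp (-‖u‖ ^ 2 / 2) = (2 * π) ^ (Fintype.card ι / 2 : ℝ) := by
  have h := GaussianFourier.integral_rexp_neg_mul_sq_norm (V := EuclideanSpace ℝ ι)
    (b := 1 / 2) (by norm_num)
  rw [finrank_euclideanSpace, show π / (1 / 2) = 2 * π by ring] at h
  simpa [neg_div, div_eq_inv_mul] using h

lemma integrable_exp_neg_sq_norm_div_two :
    Integrable fun u : EuclideanSpace ℝ ι => exp (-‖u‖ ^ 2 / 2) :=
  .of_integral_ne_zero <| by rw [integral_exp_neg_sq_norm_div_two]; positivity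

lemma exp_neg_sq_norm_toLp_div_two (y : ι → ℝ) :
    exp (-‖WithLp.toLp 2 y‖ ^ 2 / 2) = ∏ j, exp (-y j ^ 2 / 2) := by
  rw [EuclideanSpace.real_norm_sq_eq, ← exp_sum, ← Finset.sum_neg_distrib, Finset.sum_div]

lemma sq_mul_exp_neg_sq_norm_toLp_div_two [DecidableEq ι] (i : ι) (y : ι → ℝ) :
    y i ^ 2 * exp (-‖WithLp.toLp 2 y‖ ^ 2 / 2) =
      ∏ j, (if j = i then y j ^ 2 else 1) * exp (-y j ^ 2 / 2) := by
  rw [exp_neg_sq_norm_toLp_div_two, Finset.prod_mul_distrib, Finset.prod_ite_eq']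
  simp

lemma integrable_sq_apply_mul_exp_neg_sq_norm_div_two (i : ι) :
    Integrable fun u : EuclideanSpace ℝ ι => u i ^ 2 * exp (-‖u‖ ^ 2 / 2) := by
  classical
  rw [← (PiLp.volume_preserving_toLp ι).integrable_comp_emb
    (MeasurableEquiv.toLp 2 _).measurableEmbedding]
  simp only [Function.comp_def, sq_mul_exp_neg_sq_norm_toLp_div_two i]
  refine Integrable.fintype_prod (μ := fun _ => volume)
    (f := fun j x => (if j = i then x ^ 2 else 1) * exp (-x ^ 2 / 2)) fun j => ?_
  split_ifs
  · exact integrable_pow_mul_exp_neg_sq_div_two 2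
  · simpa using integrable_pow_mul_exp_neg_sq_div_two 0

lemma integral_sq_apply_mul_exp_neg_sq_norm_div_two (i : ι) :
    ∫ u : EuclideanSpace ℝ ι, u i ^ 2 * exp (-‖u‖ ^ 2 / 2) =
      ∫ u : EuclideanSpace ℝ ι, exp (-‖u‖ ^ 2 / 2) := by
  classical
  simp only [← (PiLp.volume_preserving_toLp ι).integral_comp
    (MeasurableEquiv.toLp 2 _).measurableEmbedding,
    sq_mul_exp_neg_sq_norm_toLp_div_two i, exp_neg_sq_norm_toLp_div_two]
  rw [integral_fintype_prod_volume_eq_prod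
      (fun j x => (if j = i then x ^ 2 else 1) * exp (-x ^ 2 / 2)),
    integral_fintype_prod_volume_eq_prod (fun _ x => exp (-x ^ 2 / 2))]
  refine Finset.prod_congr rfl fun j _ => ?_
  split_ifs
  · exact integral_sq_mul_exp_neg_sq_div_two
  · simp

lemma sq_norm_mul_exp_neg_sq_norm_div_two_eq_sum (u : EuclideanSpace ℝ ι) :
    ‖u‖ ^ 2 * exp (-‖u‖ ^ 2 / 2) = ∑ i, u i ^ 2 * exp (-‖u‖ ^ 2 / 2) := by
  rw [← Finset.sum_mul, EuclideanSpace.real_norm_sq_eq]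

lemma integrable_sq_norm_mul_exp_neg_sq_norm_div_two :
    Integrable fun u : EuclideanSpace ℝ ι => ‖u‖ ^ 2 * exp (-‖u‖ ^ 2 / 2) := by
  simp only [sq_norm_mul_exp_neg_sq_norm_div_two_eq_sum]
  exact integrable_finsetSum _ fun i _ => integrable_sq_apply_mul_exp_neg_sq_norm_div_two i

lemma integral_sq_norm_mul_exp_neg_sq_norm_div_two :
    ∫ u : EuclideanSpace ℝ ι, ‖u‖ ^ 2 * exp (-‖u‖ ^ 2 / 2) =
      Fintype.card ι * ∫ u : EuclideanSpace ℝ ι, exp (-‖u‖ ^ 2 / 2) := by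
  simp only [sq_norm_mul_exp_neg_sq_norm_div_two_eq_sum]
  rw [integral_finsetSum _ fun i _ => integrable_sq_apply_mul_exp_neg_sq_norm_div_two i]
  simp [integral_sq_apply_mul_exp_neg_sq_norm_div_two]

lemma rpow_neg_mul_integral_exp_neg_sq_norm_div_two :
    (2 * π) ^ (-(Fintype.card ι : ℝ) / 2) * ∫ u : EuclideanSpace ℝ ι, exp (-‖u‖ ^ 2 / 2) = 1 := by
  rw [integral_exp_neg_sq_norm_div_two, neg_div, rpow_neg (by positivity),
    inv_mul_cancel₀ (by positivity)]

end EuclideanSpace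

lemma norm_exp_neg_sq_norm_div_two_smul_sub_le {E F : Type*} [SeminormedAddCommGroup E]
    [SeminormedAddCommGroup F] [NormedSpace ℝ F] {ψ : E → F} {K : ℝ≥0}
    (hψ : LipschitzWith K ψ) (u : E) :
    ‖exp (-‖u‖ ^ 2 / 2) • (ψ u - ψ 0)‖ ≤
      K / 2 * (‖u‖ ^ 2 * exp (-‖u‖ ^ 2 / 2) + exp (-‖u‖ ^ 2 / 2)) := by
  have hψu : ‖ψ u - ψ 0‖ ≤ K * ‖u‖ := by
    simpa [dist_eq_norm] using hψ.dist_le_mul u 0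
  have hu : ‖u‖ ≤ (‖u‖ ^ 2 + 1) / 2 := by nlinarith [sq_nonneg (‖u‖ - 1)]
  rw [norm_smul, norm_of_nonneg (exp_pos _).le]
  calc exp (-‖u‖ ^ 2 / 2) * ‖ψ u - ψ 0‖ ≤ exp (-‖u‖ ^ 2 / 2) * (K * ((‖u‖ ^ 2 + 1) / 2)) := by
        gcongr
        exact hψu.trans (by gcongr)
    _ = K / 2 * (‖u‖ ^ 2 * exp (-‖u‖ ^ 2 / 2) + exp (-‖u‖ ^ 2 / 2)) := by ring

lemma integrable_exp_neg_sq_norm_div_two_smul_sub {ι F : Type*} [Fintype ι]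
    [NormedAddCommGroup F] [NormedSpace ℝ F] {ψ : EuclideanSpace ℝ ι → F} {K : ℝ≥0}
    (hψ : LipschitzWith K ψ) :
    Integrable fun u : EuclideanSpace ℝ ι => exp (-‖u‖ ^ 2 / 2) • (ψ u - ψ 0) := by
  have hψc := hψ.continuous
  exact ((integrable_sq_norm_mul_exp_neg_sq_norm_div_two.add
      integrable_exp_neg_sq_norm_div_two).const_mul (K / 2 : ℝ)).mono'
    (Continuous.aestronglyMeasurable (by fun_prop))
    (.of_forall (norm_exp_neg_sq_norm_div_two_smul_sub_le hψ))

theorem norm_gaussian_average_sub_le {ι F : Type*} [Fintype ι] [NormedAddCommGroup F]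
    [NormedSpace ℝ F] [CompleteSpace F] {ψ : EuclideanSpace ℝ ι → F} {K : ℝ≥0}
    (hψ : LipschitzWith K ψ) :
    ‖(2 * π) ^ (-(Fintype.card ι : ℝ) / 2) •
        (∫ u : EuclideanSpace ℝ ι, exp (-‖u‖ ^ 2 / 2) • ψ u) - ψ 0‖ ≤
      K * (Fintype.card ι + 1) / 2 := by
  set c : ℝ := (2 * π) ^ (-(Fintype.card ι : ℝ) / 2)
  have hsplit : ∫ u : EuclideanSpace ℝ ι, exp (-‖u‖ ^ 2 / 2) • ψ u =
      (∫ u : EuclideanSpace ℝ ι, exp (-‖u‖ ^ 2 / 2) • (ψ u - ψ 0)) +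
        (∫ u : EuclideanSpace ℝ ι, exp (-‖u‖ ^ 2 / 2)) • ψ 0 := by
    rw [← integral_smul_const, ← integral_add (integrable_exp_neg_sq_norm_div_two_smul_sub hψ)
      (integrable_exp_neg_sq_norm_div_two.smul_const _)]
    simp_rw [← smul_add, sub_add_cancel]
  rw [hsplit, smul_add, smul_smul, rpow_neg_mul_integral_exp_neg_sq_norm_div_two, one_smul,
    add_sub_cancel_right, norm_smul, norm_of_nonneg (by positivity)]
  calc c * ‖∫ u : EuclideanSpace ℝ ι, exp (-‖u‖ ^ 2 / 2) • (ψ u - ψ 0)‖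
      ≤ c * ∫ u : EuclideanSpace ℝ ι,
          K / 2 * (‖u‖ ^ 2 * exp (-‖u‖ ^ 2 / 2) + exp (-‖u‖ ^ 2 / 2)) := by
        gcongr
        exact norm_integral_le_of_norm_le ((integrable_sq_norm_mul_exp_neg_sq_norm_div_two.add
          integrable_exp_neg_sq_norm_div_two).const_mul _)
          (.of_forall (norm_exp_neg_sq_norm_div_two_smul_sub_le hψ))
    _ = K * (Fintype.card ι + 1) / 2 * (c * ∫ u : EuclideanSpace ℝ ι, exp (-‖u‖ ^ 2 / 2)) := by
        rw [integral_const_mul, integral_add integrable_sq_norm_mul_exp_neg_sq_norm_div_two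
          integrable_exp_neg_sq_norm_div_two, integral_sq_norm_mul_exp_neg_sq_norm_div_two]
        ring
    _ = K * (Fintype.card ι + 1) / 2 := by
        rw [rpow_neg_mul_integral_exp_neg_sq_norm_div_two, mul_one]

theorem gaussian_smoothing_gradient_error_general
    (d : ℕ)
    (f' : EuclideanSpace ℝ (Fin d) → EuclideanSpace ℝ (Fin d))
    (L : ℝ) (hL : 0 ≤ L)
    (hlip : ∀ x y, ‖f' x - f' y‖ ≤ L * ‖x - y‖)
    (μ : ℝ) (hμ : 0 < μ)
    (fμ' : EuclideanSpace ℝ (Fin d) → EuclideanSpace ℝ (Fin d))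
    (hfμ' : ∀ x, fμ' x = (2 * π) ^ (-(d : ℝ) / 2) •
      ∫ u : EuclideanSpace ℝ (Fin d), Real.exp (-‖u‖ ^ 2 / 2) • f' (x + μ • u)) :
    ∀ x, ‖fμ' x - f' x‖ ≤ μ * L * ((d : ℝ) + 3) ^ ((3 : ℝ) / 2) / 2 := by
  intro x
  have hLμ : 0 ≤ L * μ := mul_nonneg hL hμ.le
  have hψ : LipschitzWith (L * μ).toNNReal fun u => f' (x + μ • u) := by
    refine LipschitzWith.of_dist_le_mul fun u v => ?_
    rw [Real.coe_toNNReal _ hLμ, dist_eq_norm, dist_eq_norm]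
    calc ‖f' (x + μ • u) - f' (x + μ • v)‖ ≤ L * ‖x + μ • u - (x + μ • v)‖ := hlip _ _
      _ = L * μ * ‖u - v‖ := by
        rw [add_sub_add_left_eq_sub, ← smul_sub, norm_smul, norm_of_nonneg hμ.le, mul_assoc]
  have hdim : (d : ℝ) + 1 ≤ ((d : ℝ) + 3) ^ ((3 : ℝ) / 2) :=
    (by linarith : (d : ℝ) + 1 ≤ d + 3).trans
      (self_le_rpow_of_one_le (by linarith [d.cast_nonneg (α := ℝ)]) (by norm_num))
  calc ‖fμ' x - f' x‖ ≤ L * μ * (d + 1) / 2 := by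
        simpa [hfμ' x, Real.coe_toNNReal _ hLμ] using norm_gaussian_average_sub_le hψ
    _ ≤ μ * L * ((d : ℝ) + 3) ^ ((3 : ℝ) / 2) / 2 := by
        rw [mul_comm L μ]
        gcongr

/-- If `f : ℝ^d → ℝ` is L-smooth, then `‖∇f_μ(x) − ∇f(x)‖ ≤ μ L (d+3)^{3/2} / 2`
for every `x`, where `f_μ` is the Gaussian smoothing of `f`. -/
theorem gaussian_smoothing_gradient_error
    (d : ℕ) (f : EuclideanSpace ℝ (Fin d) → ℝ)
    (f' : EuclideanSpace ℝ (Fin d) → EuclideanSpace ℝ (Fin d))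
    (hf : ∀ x, HasGradientAt f (f' x) x)
    (L : ℝ) (hL : 0 ≤ L)
    (hlip : ∀ x y, ‖f' x - f' y‖ ≤ L * ‖x - y‖)
    (μ : ℝ) (hμ : 0 < μ)
    (hint : ∀ x : EuclideanSpace ℝ (Fin d),
      Integrable (fun u : EuclideanSpace ℝ (Fin d) =>
        Real.exp (-‖u‖ ^ 2 / 2) • f' (x + μ • u)))
    (fμ' : EuclideanSpace ℝ (Fin d) → EuclideanSpace ℝ (Fin d))
    (hfμ' : ∀ x, fμ' x = (2 * π) ^ (-(d : ℝ) / 2) •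
      ∫ u : EuclideanSpace ℝ (Fin d), Real.exp (-‖u‖ ^ 2 / 2) • f' (x + μ • u)) :
    ∀ x, ‖fμ' x - f' x‖ ≤ μ * L * ((d : ℝ) + 3) ^ ((3 : ℝ) / 2) / 2 :=
  gaussian_smoothing_gradient_error_general d f' L hL hlip μ hμ fμ' hfμ'
end

section
/- If f : ℝ^d → ℝ is L-smooth, then for all x: ‖∇f(x)‖² ≤ 2‖∇f_μ(x)‖² + (μ² L² (d + 6)³)/2, where f_μ is the Gaussian smoothing of f. -/
/-!
Since `∇f_μ` is the Gaussian average of `∇f` over the points `x + μ u`, the Lipschitz bound on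
`∇f` gives `‖∇f(x) - ∇f_μ(x)‖ ≤ L |μ| 𝔼‖u‖`. The Gaussian density factorises over coordinates,
so `𝔼‖u‖ ≤ ∑ⱼ 𝔼|uⱼ| = d √(2/π) ≤ d`. Hence `‖∇f(x)‖² ≤ 2‖∇f_μ(x)‖² + 2 μ² L² d²`, and
`4 d² ≤ (d + 6)³`.
-/

open MeasureTheory Real

theorem integral_exp_neg_half_sq : ∫ t : ℝ, exp (-t ^ 2 / 2) = √(2 * π) := by
  simpa [neg_div, div_eq_inv_mul, div_inv_eq_mul, mul_comm] using integral_gaussian (1 / 2)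

theorem integrable_exp_neg_half_sq : Integrable fun t : ℝ => exp (-t ^ 2 / 2) := by
  simpa [neg_div, div_eq_inv_mul] using integrable_exp_neg_mul_sq (b := 1 / 2) (by norm_num)

theorem integrable_abs_mul_exp_neg_half_sq :
    Integrable fun t : ℝ => |t| * exp (-t ^ 2 / 2) := by
  simpa [neg_div, div_eq_inv_mul] using
    (integrable_mul_exp_neg_mul_sq (b := 1 / 2) (by norm_num)).abs

theorem integral_abs_mul_exp_neg_half_sq : ∫ t : ℝ, |t| * exp (-t ^ 2 / 2) = 2 := by
  have hhalf : ∫ t in Set.Ioi (0 : ℝ), t * exp (-t ^ 2 / 2) = 1 := by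
    have hcomplex := integral_mul_cexp_neg_mul_sq (b := 1 / 2) (by norm_num)
    norm_num at hcomplex
    have : ((∫ t in Set.Ioi (0 : ℝ), t * exp (-t ^ 2 / 2) : ℝ) : ℂ) = 1 := by
      rw [← integral_complex_ofReal, ← hcomplex]
      push_cast [Complex.ofReal_exp]
      ring_nf
    exact_mod_cast this
  have heven := integral_comp_abs (f := fun t : ℝ => t * exp (-t ^ 2 / 2))
  simp only [sq_abs, hhalf] at heven
  linarith

theorem rpow_neg_natCast_div_two {a : ℝ} (ha : 0 ≤ a) (n : ℕ) :
    a ^ (-(n : ℝ) / 2) = (√a ^ n)⁻¹ := by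
  rw [neg_div, rpow_neg ha, sqrt_eq_rpow, ← rpow_natCast, ← rpow_mul ha]
  ring_nf

namespace EuclideanSpace

variable {ι : Type*} [Fintype ι]

theorem integral_prod_apply (g : ι → ℝ → ℝ) :
    ∫ u : EuclideanSpace ℝ ι, ∏ i, g i (u i) = ∏ i, ∫ t, g i t := by
  rw [← (PiLp.volume_preserving_toLp ι).integral_comp
    (MeasurableEquiv.toLp 2 (ι → ℝ)).measurableEmbedding]
  exact integral_fintype_prod_volume_eq_prod g

theorem integrable_prod_apply {g : ι → ℝ → ℝ} (hg : ∀ i, Integrable (g i)) :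
    Integrable fun u : EuclideanSpace ℝ ι => ∏ i, g i (u i) := by
  rw [← (PiLp.volume_preserving_toLp ι).integrable_comp_emb
    (MeasurableEquiv.toLp 2 (ι → ℝ)).measurableEmbedding]
  exact Integrable.fintype_prod hg

theorem exp_neg_half_norm_sq (u : EuclideanSpace ℝ ι) :
    exp (-‖u‖ ^ 2 / 2) = ∏ i, exp (-u i ^ 2 / 2) := by
  rw [← exp_sum, real_norm_sq_eq, ← Finset.sum_div, Finset.sum_neg_distrib]

theorem abs_apply_mul_exp_neg_half_norm_sq [DecidableEq ι] (j : ι) (u : EuclideanSpace ℝ ι) :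
    |u j| * exp (-‖u‖ ^ 2 / 2) = ∏ i, (if i = j then |u i| else 1) * exp (-u i ^ 2 / 2) := by
  rw [Finset.prod_mul_distrib, Finset.prod_ite_eq', if_pos (Finset.mem_univ j),
    exp_neg_half_norm_sq]

theorem integral_exp_neg_half_norm_sq :
    ∫ u : EuclideanSpace ℝ ι, exp (-‖u‖ ^ 2 / 2) = √(2 * π) ^ Fintype.card ι := by
  simp only [exp_neg_half_norm_sq, integral_prod_apply fun _ t => exp (-t ^ 2 / 2),
    integral_exp_neg_half_sq, Finset.prod_const, Finset.card_univ]

theorem integrable_exp_neg_half_norm_sq :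
    Integrable fun u : EuclideanSpace ℝ ι => exp (-‖u‖ ^ 2 / 2) := by
  simpa only [exp_neg_half_norm_sq] using
    integrable_prod_apply fun _ => integrable_exp_neg_half_sq

theorem integral_abs_apply_mul_exp_neg_half_norm_sq (j : ι) :
    ∫ u : EuclideanSpace ℝ ι, |u j| * exp (-‖u‖ ^ 2 / 2) =
      2 * √(2 * π) ^ (Fintype.card ι - 1) := by
  classical
  simp only [abs_apply_mul_exp_neg_half_norm_sq j,
    integral_prod_apply fun i t => (if i = j then |t| else 1) * exp (-t ^ 2 / 2)]
  have hother : ∀ i ∈ ({j}ᶜ : Finset ι),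
      ∫ t, (if i = j then |t| else 1) * exp (-t ^ 2 / 2) = √(2 * π) := fun i hi => by
    simp only [if_neg (by simpa using hi : i ≠ j), one_mul, integral_exp_neg_half_sq]
  rw [Fintype.prod_eq_mul_prod_compl j, Finset.prod_congr rfl hother, Finset.prod_const,
    Finset.card_compl, Finset.card_singleton]
  simp only [↓reduceIte, integral_abs_mul_exp_neg_half_sq]

theorem integrable_abs_apply_mul_exp_neg_half_norm_sq (j : ι) :
    Integrable fun u : EuclideanSpace ℝ ι => |u j| * exp (-‖u‖ ^ 2 / 2) := by
  classical
  simp only [abs_apply_mul_exp_neg_half_norm_sq j]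
  refine integrable_prod_apply (g := fun i t => (if i = j then |t| else 1) * exp (-t ^ 2 / 2))
    fun i => ?_
  split_ifs
  · exact integrable_abs_mul_exp_neg_half_sq
  · simpa only [one_mul] using integrable_exp_neg_half_sq

theorem norm_le_sum_abs_apply (u : EuclideanSpace ℝ ι) : ‖u‖ ≤ ∑ i, |u i| := by
  refine (pow_le_pow_iff_left₀ (norm_nonneg u) (by positivity) two_ne_zero).1 ?_
  simpa only [real_norm_sq_eq, sq_abs] using
    Finset.sum_sq_le_sq_sum_of_nonneg (s := Finset.univ) fun i _ => abs_nonneg (u i)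

theorem norm_mul_exp_neg_half_norm_sq_le (u : EuclideanSpace ℝ ι) :
    ‖u‖ * exp (-‖u‖ ^ 2 / 2) ≤ ∑ j, |u j| * exp (-‖u‖ ^ 2 / 2) := by
  rw [← Finset.sum_mul]
  gcongr
  exact norm_le_sum_abs_apply u

theorem integrable_norm_mul_exp_neg_half_norm_sq :
    Integrable fun u : EuclideanSpace ℝ ι => ‖u‖ * exp (-‖u‖ ^ 2 / 2) := by
  refine (integrable_finsetSum Finset.univ fun j _ =>
    integrable_abs_apply_mul_exp_neg_half_norm_sq j).mono' (by fun_prop) (.of_forall fun u => ?_)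
  rw [norm_of_nonneg (by positivity)]
  exact norm_mul_exp_neg_half_norm_sq_le u

theorem integral_norm_mul_exp_neg_half_norm_sq_le :
    ∫ u : EuclideanSpace ℝ ι, ‖u‖ * exp (-‖u‖ ^ 2 / 2) ≤
      Fintype.card ι * √(2 * π) ^ Fintype.card ι := by
  have hcoord (j : ι) : 2 * √(2 * π) ^ (Fintype.card ι - 1) ≤ √(2 * π) ^ Fintype.card ι := by
    have htwo : 2 ≤ √(2 * π) := le_sqrt_of_sq_le (by nlinarith [pi_gt_three])
    calc 2 * √(2 * π) ^ (Fintype.card ι - 1)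
        ≤ √(2 * π) * √(2 * π) ^ (Fintype.card ι - 1) := by gcongr
      _ = √(2 * π) ^ Fintype.card ι := by
        rw [← pow_succ', Nat.sub_add_cancel (Fintype.card_pos_iff.2 ⟨j⟩)]
  have hint (j : ι) := integrable_abs_apply_mul_exp_neg_half_norm_sq j
  calc ∫ u : EuclideanSpace ℝ ι, ‖u‖ * exp (-‖u‖ ^ 2 / 2)
      ≤ ∫ u : EuclideanSpace ℝ ι, ∑ j, |u j| * exp (-‖u‖ ^ 2 / 2) :=
        integral_mono integrable_norm_mul_exp_neg_half_norm_sq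
          (integrable_finsetSum _ fun j _ => hint j) norm_mul_exp_neg_half_norm_sq_le
    _ = ∑ _j : ι, 2 * √(2 * π) ^ (Fintype.card ι - 1) := by
        rw [integral_finsetSum _ fun j _ => hint j]
        simp only [integral_abs_apply_mul_exp_neg_half_norm_sq]
    _ ≤ ∑ _j : ι, √(2 * π) ^ Fintype.card ι := Finset.sum_le_sum fun j _ => hcoord j
    _ = Fintype.card ι * √(2 * π) ^ Fintype.card ι := by
        rw [Finset.sum_const, Finset.card_univ, nsmul_eq_mul]

end EuclideanSpace

section GaussianSmoothing

variable {ι F : Type*} [Fintype ι] [NormedAddCommGroup F] [NormedSpace ℝ F]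

/-- `𝔼_{u ∼ 𝒩(0, I)} g (x + μ u)`; for `g = ∇f` this is `∇f_μ`. -/
noncomputable def gaussianSmoothing (μ : ℝ) (g : EuclideanSpace ℝ ι → F)
    (x : EuclideanSpace ℝ ι) : F :=
  (2 * π) ^ (-(Fintype.card ι : ℝ) / 2) • ∫ u, exp (-‖u‖ ^ 2 / 2) • g (x + μ • u)

theorem norm_gaussianSmoothing_sub_le [CompleteSpace F] {g : EuclideanSpace ℝ ι → F} {L : ℝ}
    (hL : 0 ≤ L) (hg : ∀ x y, ‖g x - g y‖ ≤ L * ‖x - y‖) (μ : ℝ) (x : EuclideanSpace ℝ ι)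
    (hint : Integrable fun u : EuclideanSpace ℝ ι => exp (-‖u‖ ^ 2 / 2) • g (x + μ • u)) :
    ‖gaussianSmoothing μ g x - g x‖ ≤ L * |μ| * Fintype.card ι := by
  set S := √(2 * π) ^ Fintype.card ι
  have hS : 0 < S := by positivity
  have hnormalize : (2 * π) ^ (-(Fintype.card ι : ℝ) / 2) = S⁻¹ :=
    rpow_neg_natCast_div_two (by positivity) _
  have hconst : g x = S⁻¹ • ∫ u : EuclideanSpace ℝ ι, exp (-‖u‖ ^ 2 / 2) • g x := by
    rw [integral_smul_const, EuclideanSpace.integral_exp_neg_half_norm_sq, smul_smul,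
      inv_mul_cancel₀ hS.ne', one_smul]
  have hdiff : gaussianSmoothing μ g x - g x =
      S⁻¹ • ∫ u : EuclideanSpace ℝ ι, exp (-‖u‖ ^ 2 / 2) • (g (x + μ • u) - g x) := by
    conv_lhs => rw [hconst]
    rw [gaussianSmoothing, hnormalize, ← smul_sub,
      ← integral_sub hint (EuclideanSpace.integrable_exp_neg_half_norm_sq.smul_const _)]
    simp only [smul_sub]
  have hpoint (u : EuclideanSpace ℝ ι) : ‖exp (-‖u‖ ^ 2 / 2) • (g (x + μ • u) - g x)‖ ≤
      L * |μ| * (‖u‖ * exp (-‖u‖ ^ 2 / 2)) := by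
    calc ‖exp (-‖u‖ ^ 2 / 2) • (g (x + μ • u) - g x)‖
        = exp (-‖u‖ ^ 2 / 2) * ‖g (x + μ • u) - g x‖ := by
          rw [norm_smul, norm_of_nonneg (exp_nonneg _)]
      _ ≤ exp (-‖u‖ ^ 2 / 2) * (L * ‖μ • u‖) := by
          gcongr
          simpa only [add_sub_cancel_left] using hg (x + μ • u) x
      _ = L * |μ| * (‖u‖ * exp (-‖u‖ ^ 2 / 2)) := by
          rw [norm_smul, norm_eq_abs]
          ring
  calc ‖gaussianSmoothing μ g x - g x‖
      ≤ S⁻¹ * ∫ u : EuclideanSpace ℝ ι, L * |μ| * (‖u‖ * exp (-‖u‖ ^ 2 / 2)) := by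
        rw [hdiff, norm_smul, norm_of_nonneg (inv_nonneg.2 hS.le)]
        gcongr
        exact norm_integral_le_of_norm_le
          (EuclideanSpace.integrable_norm_mul_exp_neg_half_norm_sq.const_mul _)
          (.of_forall hpoint)
    _ ≤ S⁻¹ * (L * |μ| * (Fintype.card ι * S)) := by
        rw [integral_const_mul]
        gcongr
        exact EuclideanSpace.integral_norm_mul_exp_neg_half_norm_sq_le
    _ = L * |μ| * Fintype.card ι := by field_simp

end GaussianSmoothing

theorem gradient_bound_via_smoothed_gradient_general
    (d : ℕ)
    (f' : EuclideanSpace ℝ (Fin d) → EuclideanSpace ℝ (Fin d))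
    (L : ℝ) (hL : 0 ≤ L)
    (hlip : ∀ x y, ‖f' x - f' y‖ ≤ L * ‖x - y‖)
    (μ : ℝ)
    (hint : ∀ x : EuclideanSpace ℝ (Fin d),
      Integrable (fun u : EuclideanSpace ℝ (Fin d) =>
        Real.exp (-‖u‖ ^ 2 / 2) • f' (x + μ • u)))
    (fμ' : EuclideanSpace ℝ (Fin d) → EuclideanSpace ℝ (Fin d))
    (hfμ' : ∀ x, fμ' x = (2 * π) ^ (-(d : ℝ) / 2) •
      ∫ u : EuclideanSpace ℝ (Fin d), Real.exp (-‖u‖ ^ 2 / 2) • f' (x + μ • u)) :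
    ∀ x, ‖f' x‖ ^ 2 ≤ 2 * ‖fμ' x‖ ^ 2 + μ ^ 2 * L ^ 2 * ((d : ℝ) + 6) ^ 3 / 2 := by
  intro x
  have hsmooth : fμ' x = gaussianSmoothing μ f' x := by
    rw [hfμ' x, gaussianSmoothing, Fintype.card_fin]
  have hclose : ‖f' x - fμ' x‖ ≤ L * |μ| * d := by
    simpa only [norm_sub_rev, hsmooth, Fintype.card_fin] using
      norm_gaussianSmoothing_sub_le hL hlip μ x (hint x)
  have hclose_sq : ‖f' x - fμ' x‖ ^ 2 ≤ μ ^ 2 * L ^ 2 * d ^ 2 := by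
    calc ‖f' x - fμ' x‖ ^ 2 ≤ (L * |μ| * d) ^ 2 := by gcongr
      _ = μ ^ 2 * L ^ 2 * d ^ 2 := by rw [mul_pow, mul_pow, sq_abs]; ring
  have hcube : 4 * (d : ℝ) ^ 2 ≤ ((d : ℝ) + 6) ^ 3 := by nlinarith [d.cast_nonneg (α := ℝ)]
  calc ‖f' x‖ ^ 2 ≤ (‖fμ' x‖ + ‖f' x - fμ' x‖) ^ 2 := by
        gcongr
        exact norm_le_norm_add_norm_sub' (f' x) (fμ' x)
    _ ≤ 2 * (‖fμ' x‖ ^ 2 + ‖f' x - fμ' x‖ ^ 2) := add_sq_le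
    _ ≤ 2 * ‖fμ' x‖ ^ 2 + μ ^ 2 * L ^ 2 * ((d : ℝ) + 6) ^ 3 / 2 := by
        linarith [mul_le_mul_of_nonneg_left hcube (by positivity : 0 ≤ μ ^ 2 * L ^ 2)]

/-- If `f : ℝ^d → ℝ` is L-smooth, then
`‖∇f(x)‖² ≤ 2‖∇f_μ(x)‖² + μ² L² (d+6)³ / 2` for all `x`. -/
theorem gradient_bound_via_smoothed_gradient
    (d : ℕ) (f : EuclideanSpace ℝ (Fin d) → ℝ)
    (f' : EuclideanSpace ℝ (Fin d) → EuclideanSpace ℝ (Fin d))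
    (hf : ∀ x, HasGradientAt f (f' x) x)
    (L : ℝ) (hL : 0 ≤ L)
    (hlip : ∀ x y, ‖f' x - f' y‖ ≤ L * ‖x - y‖)
    (μ : ℝ) (hμ : 0 < μ)
    (hint : ∀ x : EuclideanSpace ℝ (Fin d),
      Integrable (fun u : EuclideanSpace ℝ (Fin d) =>
        Real.exp (-‖u‖ ^ 2 / 2) • f' (x + μ • u)))
    (fμ' : EuclideanSpace ℝ (Fin d) → EuclideanSpace ℝ (Fin d))
    (hfμ' : ∀ x, fμ' x = (2 * π) ^ (-(d : ℝ) / 2) •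
      ∫ u : EuclideanSpace ℝ (Fin d), Real.exp (-‖u‖ ^ 2 / 2) • f' (x + μ • u)) :
    ∀ x, ‖f' x‖ ^ 2 ≤ 2 * ‖fμ' x‖ ^ 2 + μ ^ 2 * L ^ 2 * ((d : ℝ) + 6) ^ 3 / 2 :=
  gradient_bound_via_smoothed_gradient_general d f' L hL hlip μ hint fμ' hfμ'
end
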